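/- Fix c ∈ [−1,1] and ω ∈ ℝ. Then, as h → 0⁺, (Q̂₁(hω; h) + ω²)/h⁴ converges to (4 + 13c)ω⁶/(2880(2 − c)); i.e. the principal symbol satisfies Q̂₁(hω; h) = −ω² + (4+13c)ω⁶h⁴/(2880(2−c)) + o(h⁴). -/

import Mathlib

/-!
By the half-angle formulas the radicand of `Δ` is a cubic `A(cos θ)` (`radicandPoly`). Replace
`cos` by its degree-6 Taylor polynomial `C₆` and let `P` (`delTaylor6`) be the even polynomial of
degree 6 with `A(C₆ θ) - P(θ)² = O(θ⁸)`. Since `P(0) = 16 - 8c > 0`, the estimate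
`|√x - p| ≤ |x - p²| / p` gives `Δ(θ) - P(θ) = o(θ⁶)`. In `Q̂₁(θ; 1) + θ²` all terms of order
below 6 then cancel, leaving `(4 + 13c) θ⁶ / (2880 (2 - c)) + o(θ⁶)`, and
`Q̂₁(hω; h) = Q̂₁(hω; 1) / h²` rescales this to the claim.
-/

open Filter Topology

/-- `Ω(θ) = −cos(θ/2)(16 − (7 + cos θ)c)`. -/
noncomputable def Om (c θ : ℝ) : ℝ :=
  -Real.cos (θ/2) * (16 - (7 + Real.cos θ)*c)

/-- `Δ(θ) = √(Ω(θ)² + 4c² sin⁶(θ/2))`. -/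
noncomputable def Del (c θ : ℝ) : ℝ :=
  Real.sqrt ((Om c θ)^2 + 4*c^2*(Real.sin (θ/2))^6)

/-- The principal symbol `Q̂₁(θ; h)`. -/
noncomputable def Qhat1 (c h θ : ℝ) : ℝ :=
  (2/(3*h^2)) * (-(15 + Real.cos θ) + (5 + 3*Real.cos θ)*c + Del c θ)

/-- The spurious symbol `Q̂₂(θ; h)`. -/
noncomputable def Qhat2 (c h θ : ℝ) : ℝ :=
  (2/(3*h^2)) * (-(15 + Real.cos θ) + (5 + 3*Real.cos θ)*c - Del c θ)

open Asymptotics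

theorem abs_sqrt_sub_le_abs_sub_sq_div {x p : ℝ} (hp : 0 < p) :
    |√x - p| ≤ |x - p ^ 2| / p := by
  rw [le_div_iff₀ hp]
  rcases le_or_gt 0 x with hx | hx
  · calc |√x - p| * p ≤ |√x - p| * (√x + p) := by gcongr; linarith [Real.sqrt_nonneg x]
      _ = |x - p ^ 2| := by
        rw [← abs_of_pos (by positivity : 0 < √x + p), ← abs_mul,
          show (√x - p) * (√x + p) = √x ^ 2 - p ^ 2 by ring, Real.sq_sqrt hx]
  · rw [Real.sqrt_eq_zero_of_nonpos hx.le, zero_sub, abs_neg, abs_of_pos hp,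
      abs_of_neg (by nlinarith)]
    nlinarith

theorem isBigO_sqrt_sub_of_tendsto {α : Type*} {l : Filter α} {g p : α → ℝ} {a : ℝ}
    (ha : 0 < a) (hp : Tendsto p l (𝓝 a)) :
    (fun x => √(g x) - p x) =O[l] fun x => g x - p x ^ 2 := by
  refine IsBigO.of_bound (2 / a) ?_
  filter_upwards [hp.eventually (lt_mem_nhds (half_lt_self ha))] with x hx
  simp only [Real.norm_eq_abs]
  calc |√(g x) - p x| ≤ |g x - p x ^ 2| / p x :=
        abs_sqrt_sub_le_abs_sub_sq_div ((half_pos ha).trans hx)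
    _ ≤ |g x - p x ^ 2| / (a / 2) := by gcongr
    _ = 2 / a * |g x - p x ^ 2| := by ring

noncomputable def cosTaylor6 (x : ℝ) : ℝ := 1 - x ^ 2 / 2 + x ^ 4 / 24 - x ^ 6 / 720

theorem cos_sub_cosTaylor6_isLittleO :
    (fun x => Real.cos x - cosTaylor6 x) =o[𝓝 0] fun x => x ^ 6 := by
  have htaylor (x : ℝ) : taylorWithinEval Real.cos 6 Set.univ 0 x = cosTaylor6 x := by
    simp [cosTaylor6, taylor_within_apply, iteratedDerivWithin_univ, Nat.factorial]
    ring
  have htaylor_isLittleO := taylor_isLittleO_univ (n := 6) (x₀ := 0) Real.contDiff_cos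
  simpa only [htaylor, sub_zero] using htaylor_isLittleO

noncomputable def radicandPoly (c y : ℝ) : ℝ :=
  (1 + y) / 2 * (16 - (7 + y) * c) ^ 2 + c ^ 2 / 2 * (1 - y) ^ 3

theorem Del_eq_sqrt_radicandPoly (c θ : ℝ) : Del c θ = √(radicandPoly c (Real.cos θ)) := by
  have hcos : Real.cos (θ / 2) ^ 2 = (1 + Real.cos θ) / 2 := by
    rw [Real.cos_sq, show 2 * (θ / 2) = θ by ring]
    ring
  have hsin : Real.sin (θ / 2) ^ 2 = (1 - Real.cos θ) / 2 := by
    rw [Real.sin_sq_eq_half_sub, show 2 * (θ / 2) = θ by ring]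
    ring
  rw [Del, Om, radicandPoly]
  congr 1
  linear_combination (16 - (7 + Real.cos θ) * c) ^ 2 * hcos
    + 4 * c ^ 2 * (Real.sin (θ / 2) ^ 4 + Real.sin (θ / 2) ^ 2 * ((1 - Real.cos θ) / 2)
      + ((1 - Real.cos θ) / 2) ^ 2) * hsin

theorem radicandPoly_cos_sub_cosTaylor6_isLittleO (c : ℝ) :
    (fun θ => radicandPoly c (Real.cos θ) - radicandPoly c (cosTaylor6 θ))
      =o[𝓝 0] fun θ => θ ^ 6 := by
  set q : ℝ → ℝ := fun θ => ((16 - 7 * c) ^ 2 - 2 * c * (16 - 7 * c) - 3 * c ^ 2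
    + (4 * c ^ 2 - 2 * c * (16 - 7 * c)) * (Real.cos θ + cosTaylor6 θ)) / 2
  have hfactor (θ : ℝ) : radicandPoly c (Real.cos θ) - radicandPoly c (cosTaylor6 θ)
      = (Real.cos θ - cosTaylor6 θ) * q θ := by
    simp only [radicandPoly, q]
    ring
  have hq : q =O[𝓝 0] fun _ => (1 : ℝ) :=
    ((by unfold q cosTaylor6; fun_prop : Continuous q).tendsto 0).isBigO_one ℝ
  simpa [hfactor] using cos_sub_cosTaylor6_isLittleO.mul_isBigO hq

noncomputable def delTaylor6 (c θ : ℝ) : ℝ :=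
  (16 - 8 * c) - (4 - 3 * c) / 2 * θ ^ 2 + (1 - 3 * c) / 24 * θ ^ 4
    + (-1 / 1440 + 19 / 1152 * c - 1 / 240 * c ^ 2) / (2 - c) * θ ^ 6

noncomputable def radicandRemainder (c θ : ℝ) : ℝ :=
  ((-1 / 80 - 1 / 80 * c + 1 / 160 * c ^ 2 + 1 / 640 * c ^ 3)
    + (1 / 8640 + 49 / 11520 * c - 5 / 4608 * c ^ 2 - 37 / 69120 * c ^ 3) * θ ^ 2
    + (-1 / 2073600 - 139 / 1382400 * c - 313 / 3686400 * c ^ 2 + 77 / 2073600 * c ^ 3) * θ ^ 4)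
    / (2 - c) ^ 2

theorem radicandPoly_cosTaylor6_sub_delTaylor6_sq {c : ℝ} (hc : c ≠ 2) (θ : ℝ) :
    radicandPoly c (cosTaylor6 θ) - delTaylor6 c θ ^ 2 = θ ^ 8 * radicandRemainder c θ := by
  have : 2 - c ≠ 0 := sub_ne_zero.mpr hc.symm
  unfold radicandPoly cosTaylor6 delTaylor6 radicandRemainder
  field_simp
  ring

theorem radicandPoly_cos_sub_delTaylor6_sq_isLittleO {c : ℝ} (hc : c ≠ 2) :
    (fun θ => radicandPoly c (Real.cos θ) - delTaylor6 c θ ^ 2) =o[𝓝 0] fun θ => θ ^ 6 := by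
  have hremainder : (fun θ => θ ^ 8 * radicandRemainder c θ) =o[𝓝 0] fun θ => θ ^ 6 := by
    have hbounded : radicandRemainder c =O[𝓝 0] fun _ => (1 : ℝ) :=
      ((by unfold radicandRemainder; fun_prop : Continuous (radicandRemainder c)).tendsto
        0).isBigO_one ℝ
    simpa using (isLittleO_pow_pow (by norm_num : 6 < 8)).mul_isBigO hbounded
  refine ((radicandPoly_cos_sub_cosTaylor6_isLittleO c).add hremainder).congr_left fun θ => ?_
  rw [← radicandPoly_cosTaylor6_sub_delTaylor6_sq hc]
  ring

theorem Del_sub_delTaylor6_isLittleO {c : ℝ} (hc : c < 2) :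
    (fun θ => Del c θ - delTaylor6 c θ) =o[𝓝 0] fun θ => θ ^ 6 := by
  have hP : Tendsto (delTaylor6 c) (𝓝 0) (𝓝 (16 - 8 * c)) :=
    (by unfold delTaylor6; fun_prop : Continuous (delTaylor6 c)).tendsto' 0 _
      (by simp [delTaylor6])
  simp only [Del_eq_sqrt_radicandPoly]
  exact (isBigO_sqrt_sub_of_tendsto (by linarith) hP).trans_isLittleO
    (radicandPoly_cos_sub_delTaylor6_sq_isLittleO hc.ne)

theorem Qhat1_add_sq_sub_isLittleO {c : ℝ} (hc : c < 2) :
    (fun θ => Qhat1 c 1 θ + θ ^ 2 - (4 + 13 * c) / (2880 * (2 - c)) * θ ^ 6)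
      =o[𝓝 0] fun θ => θ ^ 6 := by
  have h2c : 2 - c ≠ 0 := by linarith
  have hcancel (θ : ℝ) : 2 / 3 * (-(15 + cosTaylor6 θ) + (5 + 3 * cosTaylor6 θ) * c
      + delTaylor6 c θ) + θ ^ 2 - (4 + 13 * c) / (2880 * (2 - c)) * θ ^ 6 = 0 := by
    unfold cosTaylor6 delTaylor6
    field_simp
    ring
  refine ((cos_sub_cosTaylor6_isLittleO.const_mul_left (2 / 3 * (3 * c - 1))).add
    ((Del_sub_delTaylor6_isLittleO hc).const_mul_left (2 / 3))).congr_left fun θ => ?_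
  simp only [Qhat1]
  linear_combination -hcancel θ

theorem Qhat1_eq_div_sq (c h θ : ℝ) : Qhat1 c h θ = Qhat1 c 1 θ / h ^ 2 := by
  simp only [Qhat1]
  ring

/-- Fourth-order expansion of the principal symbol: as `h → 0⁺`,
`(Q̂₁(hω; h) + ω²)/h⁴ → (4 + 13c)ω⁶/(2880(2 − c))`. -/
theorem Qhat1_fourth_order (c : ℝ) (hc : c ∈ Set.Icc (-1 : ℝ) 1) (ω : ℝ) :
    Tendsto (fun h : ℝ => (Qhat1 c h (h*ω) + ω^2)/h^4) (𝓝[>] 0)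
      (𝓝 ((4 + 13*c)*ω^6/(2880*(2 - c)))) := by
  set L := (4 + 13 * c) / (2880 * (2 - c))
  have hscale : Tendsto (fun h : ℝ => h * ω) (𝓝[>] 0) (𝓝 0) := by
    simpa using (tendsto_id.mul_const ω).mono_left (nhdsWithin_le_nhds (a := (0 : ℝ)))
  have hpow : (fun h : ℝ => (h * ω) ^ 6) =O[𝓝[>] 0] fun h => h ^ 6 :=
    (isBigO_const_mul_self (ω ^ 6) (fun h : ℝ => h ^ 6) _).congr_left fun h => by ring
  have hsmall : (fun h : ℝ => Qhat1 c 1 (h * ω) + (h * ω) ^ 2 - L * (h * ω) ^ 6)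
      =o[𝓝[>] 0] fun h => h ^ 6 :=
    ((Qhat1_add_sq_sub_isLittleO (by linarith [hc.2])).comp_tendsto hscale).trans_isBigO hpow
  refine (hsmall.tendsto_div_nhds_zero.add_const (L * ω ^ 6)).congr' ?_
    |>.trans_eq (by rw [zero_add, div_mul_eq_mul_div])
  filter_upwards [self_mem_nhdsWithin] with h (hh : 0 < h)
  rw [Qhat1_eq_div_sq c h]
  field_simp
  ring
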